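/- arXiv:1306.1491 — 7 statements merged into one kernel-verified Lean document; each statement's English description precedes it below -/
import Mathlib

section
/- With Λ block-diagonal with blocks Σ_{D_k D_k|U}, and the modified cross-covariance Γ̃_{sD} whose block for D_k equals Σ_{s D_k} if k is the assigned vehicle τ_s and equals Σ_{sU} Σ_UU⁻¹ Σ_{U D_k} otherwise, one has Γ̃_{sD} Λ⁻¹ (z_D − μ_D) = Σ_{sU} Σ_UU⁻¹ (ż_U − ż_U^{τ_s}) + ż_s^{τ_s}, where ż_B^k ≜ Σ_{B D_k} Σ_{D_k D_k|U}⁻¹ (z_{D_k} − μ_{D_k}) and ż_U ≜ Σ_{k=1}^K ż_U^k. -/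
open Matrix

/-- Equation (13) of the appendix: with `Λ` block-diagonal with blocks `L k = Σ_{D_k D_k|U}`
and modified cross-covariance `Γ̃_{sD}` (true covariance `Σ_{s D_k}` on the block of the
assigned vehicle `τs`, Nyström approximation `Σ_{sU} Σ_UU⁻¹ Σ_{U D_k}` elsewhere),
`Γ̃_{sD} Λ⁻¹ (z_D − μ_D) = Σ_{sU} Σ_UU⁻¹ (ż_U − ż_U^{τs}) + ż_s^{τs}` where
`ż_B^k = Σ_{B D_k} Σ_{D_k D_k|U}⁻¹ (z_{D_k} − μ_{D_k})` and `ż_U = ∑ k, ż_U^k`. -/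
theorem stmt2 {K U : Type*} [Fintype K] [DecidableEq K] [Fintype U] [DecidableEq U]
    {δ : K → Type*} [∀ k, Fintype (δ k)] [∀ k, DecidableEq (δ k)]
    (τs : K)
    (SsU : Matrix Unit U ℝ) (SUU : Matrix U U ℝ) (hUU : IsUnit SUU.det)
    (SsD : ∀ k, Matrix Unit (δ k) ℝ) (SUD : ∀ k, Matrix U (δ k) ℝ)
    (L : ∀ k, Matrix (δ k) (δ k) ℝ) (hL : ∀ k, IsUnit (L k).det)
    (z μ : ∀ k, Matrix (δ k) Unit ℝ) :
    (Matrix.of fun (_ : Unit) (d : Sigma δ) =>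
        if d.1 = τs then SsD d.1 () d.2 else (SsU * SUU⁻¹ * SUD d.1) () d.2)
      * (Matrix.blockDiagonal' L)⁻¹
      * (Matrix.of fun (d : Sigma δ) (_ : Unit) => (z d.1 - μ d.1) d.2 ())
    = SsU * SUU⁻¹
        * ((∑ k, SUD k * (L k)⁻¹ * (z k - μ k)) - SUD τs * (L τs)⁻¹ * (z τs - μ τs))
      + SsD τs * (L τs)⁻¹ * (z τs - μ τs) := by
  have hinv : (Matrix.blockDiagonal' L)⁻¹ = Matrix.blockDiagonal' fun k => (L k)⁻¹ := by
    apply Matrix.inv_eq_right_inv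
    rw [← Matrix.blockDiagonal'_mul]
    rw [show (fun k => L k * (L k)⁻¹) = (fun _ => (1 : Matrix (δ _) (δ _) ℝ)) from
      funext fun k => Matrix.mul_nonsing_inv _ (hL k)]
    exact Matrix.blockDiagonal'_one
  have key : (Matrix.of fun (_ : Unit) (d : Sigma δ) =>
        if d.1 = τs then SsD d.1 () d.2 else (SsU * SUU⁻¹ * SUD d.1) () d.2)
      * (Matrix.blockDiagonal' L)⁻¹
      * (Matrix.of fun (d : Sigma δ) (_ : Unit) => (z d.1 - μ d.1) d.2 ())
    = ∑ k, (if k = τs then SsD k else SsU * SUU⁻¹ * SUD k) * (L k)⁻¹ * (z k - μ k) := by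
    rw [hinv]
    ext i j
    simp only [Matrix.mul_apply, Matrix.of_apply, Matrix.blockDiagonal'_apply,
      Matrix.sum_apply, ← Finset.univ_sigma_univ, Finset.sum_sigma]
    refine Finset.sum_congr rfl fun k _ => ?_
    refine Finset.sum_congr rfl fun a _ => ?_
    rw [Fintype.sum_eq_single k (fun k' hk' => by
      refine Finset.sum_eq_zero fun b _ => ?_
      rw [dif_neg hk', mul_zero])]
    simp only [dif_pos rfl, cast_eq, Matrix.mul_apply, Finset.sum_mul]
    refine Finset.sum_congr rfl fun b _ => ?_
    split_ifs with h
    · ring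
    · rw [show ((SsU * SUU⁻¹ * SUD k) i b)
          = ∑ x : U, ∑ x1 : U, SsU () x1 * SUU⁻¹ x1 x * SUD k x b from by
        simp [Matrix.mul_apply, Finset.sum_mul]]
  rw [key]
  have split : ∑ k, (if k = τs then SsD k else SsU * SUU⁻¹ * SUD k) * (L k)⁻¹ * (z k - μ k)
      = ∑ k, ((SsU * SUU⁻¹ * SUD k) * (L k)⁻¹ * (z k - μ k)
          + if k = τs then SsD k * (L k)⁻¹ * (z k - μ k)
              - (SsU * SUU⁻¹ * SUD k) * (L k)⁻¹ * (z k - μ k) else 0) := by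
    refine Finset.sum_congr rfl fun k _ => ?_
    split_ifs with h <;> simp
  rw [split, Finset.sum_add_distrib, Finset.sum_ite_eq' Finset.univ τs, if_pos (Finset.mem_univ τs)]
  have hmm : ∀ k, SsU * SUU⁻¹ * (SUD k * (L k)⁻¹ * (z k - μ k))
      = SsU * SUU⁻¹ * SUD k * (L k)⁻¹ * (z k - μ k) := fun k => by
    simp only [Matrix.mul_assoc]
  rw [Matrix.mul_sub (SsU * SUU⁻¹), Matrix.mul_sum]
  simp only [hmm]
  abel
end

section
/- With the same block-diagonal Λ and modified cross-covariance Γ̃_{sD} as above, Γ̃_{sD} Λ⁻¹ Σ_{DU} = Σ_{sU} Σ_UU⁻¹ Σ̈_UU − γ_{sU}^{τ_s}, where Σ̈_UU ≜ Σ_UU + Σ_k Σ_{U D_k} Σ_{D_k D_k|U}⁻¹ Σ_{D_k U} and γ_{sU}^k ≜ Σ_{sU} + Σ_{sU} Σ_UU⁻¹ Σ̇_{UU}^k − Σ̇_{sU}^k with Σ̇_{BB'}^k ≜ Σ_{B D_k} Σ_{D_k D_k|U}⁻¹ Σ_{D_k B'}. -/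
open Matrix

lemma aux_bd_inv {K : Type*} [Fintype K] [DecidableEq K]
    {δ : K → Type*} [∀ k, Fintype (δ k)] [∀ k, DecidableEq (δ k)]
    (L : ∀ k, Matrix (δ k) (δ k) ℝ) (hL : ∀ k, IsUnit (L k).det) :
    (Matrix.blockDiagonal' L)⁻¹ = Matrix.blockDiagonal' (fun k => (L k)⁻¹) := by
  apply inv_eq_right_inv
  rw [← Matrix.blockDiagonal'_mul]
  have : (fun k => L k * (L k)⁻¹) = fun _ => 1 := by
    funext k; exact Matrix.mul_nonsing_inv _ (hL k)
  rw [this]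
  exact Matrix.blockDiagonal'_one

lemma aux_mul_bd_mul {K U : Type*} [Fintype K] [DecidableEq K] [Fintype U]
    {δ : K → Type*} [∀ k, Fintype (δ k)] [∀ k, DecidableEq (δ k)]
    (A : Matrix Unit (Sigma δ) ℝ) (B : ∀ k, Matrix (δ k) (δ k) ℝ)
    (C : Matrix (Sigma δ) U ℝ) :
    A * Matrix.blockDiagonal' B * C
      = ∑ k, (Matrix.of fun (x : Unit) i => A x ⟨k, i⟩) * B k
          * (Matrix.of fun i (u : U) => C ⟨k, i⟩ u) := by
  ext x u
  simp only [Matrix.mul_apply, Matrix.sum_apply, Matrix.of_apply,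
    ← Finset.univ_sigma_univ, Finset.sum_sigma]
  refine Finset.sum_congr rfl fun k _ => ?_
  refine Finset.sum_congr rfl fun j _ => ?_
  congr 1
  rw [Fintype.sum_eq_single k]
  · refine Finset.sum_congr rfl fun i _ => ?_
    rw [Matrix.blockDiagonal'_apply_eq]
  · intro k' hk'
    apply Finset.sum_eq_zero
    intro i _
    rw [Matrix.blockDiagonal'_apply_ne _ _ _ hk', mul_zero]

/-- Equation (14) of the appendix: with `Λ` block-diagonal with blocks `L k = Σ_{D_k D_k|U}`
and the modified cross-covariance `Γ̃_{sD}` as in Theorem 1B,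
`Γ̃_{sD} Λ⁻¹ Σ_{DU} = Σ_{sU} Σ_UU⁻¹ Σ̈_UU − γ_{sU}^{τs}`, where
`Σ̈_UU = Σ_UU + ∑ k, Σ_{U D_k} Σ_{D_k D_k|U}⁻¹ Σ_{D_k U}` and
`γ_{sU}^k = Σ_{sU} + Σ_{sU} Σ_UU⁻¹ Σ̇_{UU}^k − Σ̇_{sU}^k` with
`Σ̇_{BB'}^k = Σ_{B D_k} Σ_{D_k D_k|U}⁻¹ Σ_{D_k B'}`. -/
theorem stmt3 {K U : Type*} [Fintype K] [DecidableEq K] [Fintype U] [DecidableEq U]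
    {δ : K → Type*} [∀ k, Fintype (δ k)] [∀ k, DecidableEq (δ k)]
    (τs : K)
    (SsU : Matrix Unit U ℝ) (SUU : Matrix U U ℝ) (hUU : IsUnit SUU.det)
    (SsD : ∀ k, Matrix Unit (δ k) ℝ) (SUD : ∀ k, Matrix U (δ k) ℝ)
    (L : ∀ k, Matrix (δ k) (δ k) ℝ) (hL : ∀ k, (L k).PosDef) :
    (Matrix.of fun (_ : Unit) (d : Sigma δ) =>
        if d.1 = τs then SsD d.1 () d.2 else (SsU * SUU⁻¹ * SUD d.1) () d.2)
      * (Matrix.blockDiagonal' L)⁻¹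
      * (Matrix.of fun (d : Sigma δ) (u : U) => SUD d.1 u d.2)
    = SsU * SUU⁻¹ * (SUU + ∑ k, SUD k * (L k)⁻¹ * (SUD k)ᵀ)
      - (SsU + SsU * SUU⁻¹ * (SUD τs * (L τs)⁻¹ * (SUD τs)ᵀ)
          - SsD τs * (L τs)⁻¹ * (SUD τs)ᵀ) := by
  have hLu : ∀ k, IsUnit (L k).det := fun k =>
    isUnit_iff_ne_zero.mpr (hL k).det_pos.ne'
  rw [aux_bd_inv L hLu, aux_mul_bd_mul]
  have key : ∀ k, (Matrix.of fun (x : Unit) i =>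
        (Matrix.of fun (_ : Unit) (d : Sigma δ) =>
          if d.1 = τs then SsD d.1 () d.2 else (SsU * SUU⁻¹ * SUD d.1) () d.2) x ⟨k, i⟩)
        * (L k)⁻¹
        * (Matrix.of fun i (u : U) =>
            (Matrix.of fun (d : Sigma δ) (u : U) => SUD d.1 u d.2) ⟨k, i⟩ u)
      = SsU * SUU⁻¹ * SUD k * (L k)⁻¹ * (SUD k)ᵀ
        + (if k = τs then
            SsD k * (L k)⁻¹ * (SUD k)ᵀ - SsU * SUU⁻¹ * SUD k * (L k)⁻¹ * (SUD k)ᵀ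
          else 0) := by
    intro k
    have h1 : (Matrix.of fun (x : Unit) i =>
        (Matrix.of fun (_ : Unit) (d : Sigma δ) =>
          if d.1 = τs then SsD d.1 () d.2 else (SsU * SUU⁻¹ * SUD d.1) () d.2) x ⟨k, i⟩)
        = if k = τs then SsD k else SsU * SUU⁻¹ * SUD k := by
      ext x i
      by_cases h : k = τs <;> simp [h]
    have h2 : (Matrix.of fun i (u : U) =>
        (Matrix.of fun (d : Sigma δ) (u : U) => SUD d.1 u d.2) ⟨k, i⟩ u) = (SUD k)ᵀ := rfl
    rw [h1, h2]
    split_ifs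
    · abel
    · rw [add_zero]
  rw [Finset.sum_congr rfl fun k _ => key k, Finset.sum_add_distrib,
    Finset.sum_ite_eq' Finset.univ τs]
  rw [if_pos (Finset.mem_univ τs), Matrix.mul_add,
    Matrix.nonsing_inv_mul_cancel_right _ _ hUU, Matrix.mul_sum]
  simp only [← Matrix.mul_assoc]
  abel
end

section
/- If τ_s = τ_{s'} = k, then Γ̃_{sD} Λ⁻¹ Γ̃_{Ds'} = α_{sU} Σ̈_UU α_{Us'} − α_{sU} γ_{Us'}^k − α_{sU} Σ̇_{Us'}^k + Σ̇_{ss'}^k, where α_{sU} ≜ Σ_{sU} Σ_UU⁻¹ (α_{Us'} its transpose analogue), Σ̈_UU is the global summary matrix, γ is as defined via the local summaries, and Σ̇^k are local summary terms. -/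
open Matrix

lemma key_rbc {K : Type*} [Fintype K] [DecidableEq K]
    {δ : K → Type*} [∀ k, Fintype (δ k)] [∀ k, DecidableEq (δ k)]
    (f : ∀ i, Matrix Unit (δ i) ℝ) (g : ∀ i, Matrix (δ i) Unit ℝ)
    (M : ∀ i, Matrix (δ i) (δ i) ℝ) :
    (Matrix.of fun (_ : Unit) (d : Sigma δ) => f d.1 () d.2)
      * Matrix.blockDiagonal' M
      * (Matrix.of fun (d : Sigma δ) (_ : Unit) => g d.1 d.2 ())
    = ∑ i, f i * M i * g i := by
  ext u v
  rw [Matrix.mul_apply, ← Finset.univ_sigma_univ, Finset.sum_sigma, Matrix.sum_apply]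
  refine Finset.sum_congr rfl fun i2 _ => ?_
  rw [Matrix.mul_apply]
  refine Finset.sum_congr rfl fun x2 _ => ?_
  have hv : v = () := rfl
  have hu : u = () := rfl
  subst hv hu
  congr 1
  rw [Matrix.mul_apply, Matrix.mul_apply, ← Finset.univ_sigma_univ, Finset.sum_sigma]
  rw [Finset.sum_eq_single i2]
  · simp
  · intro b _ hb
    simp [blockDiagonal'_apply_ne _ _ _ hb]
  · simp


/-- Equation (15) of the appendix (same-vehicle case `τ_s = τ_{s'} = k`):
`Γ̃_{sD} Λ⁻¹ Γ̃_{Ds'} = α_{sU} Σ̈_UU α_{Us'} − α_{sU} γ_{Us'}^k − α_{sU} Σ̇_{Us'}^k + Σ̇_{ss'}^k`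
with `α_{sU} = Σ_{sU} Σ_UU⁻¹`, `α_{Us'} = Σ_UU⁻¹ Σ_{Us'}`,
`Σ̇_{BB'}^i = Σ_{B D_i} Σ_{D_i D_i|U}⁻¹ Σ_{D_i B'}`, `Σ̈_UU = Σ_UU + ∑ i, Σ̇_{UU}^i`,
`γ_{Us'}^k = Σ_{Us'} + Σ̇_{UU}^k Σ_UU⁻¹ Σ_{Us'} − Σ̇_{Us'}^k` (the transpose of `γ_{s'U}^k`). -/
theorem stmt4 {K U : Type*} [Fintype K] [DecidableEq K] [Fintype U] [DecidableEq U]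
    {δ : K → Type*} [∀ k, Fintype (δ k)] [∀ k, DecidableEq (δ k)]
    (k : K)
    (SsU : Matrix Unit U ℝ) (SUs' : Matrix U Unit ℝ) (SUU : Matrix U U ℝ)
    (hUU : SUU.PosDef)
    (SsD : ∀ i, Matrix Unit (δ i) ℝ) (SDs' : ∀ i, Matrix (δ i) Unit ℝ)
    (SUD : ∀ i, Matrix U (δ i) ℝ)
    (L : ∀ i, Matrix (δ i) (δ i) ℝ) (hL : ∀ i, (L i).PosDef) :
    (Matrix.of fun (_ : Unit) (d : Sigma δ) =>
        if d.1 = k then SsD d.1 () d.2 else (SsU * SUU⁻¹ * SUD d.1) () d.2)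
      * (Matrix.blockDiagonal' L)⁻¹
      * (Matrix.of fun (d : Sigma δ) (_ : Unit) =>
          if d.1 = k then SDs' d.1 d.2 () else ((SUD d.1)ᵀ * SUU⁻¹ * SUs') d.2 ())
    = SsU * SUU⁻¹ * (SUU + ∑ i, SUD i * (L i)⁻¹ * (SUD i)ᵀ) * (SUU⁻¹ * SUs')
      - SsU * SUU⁻¹
          * (SUs' + SUD k * (L k)⁻¹ * (SUD k)ᵀ * SUU⁻¹ * SUs' - SUD k * (L k)⁻¹ * SDs' k)
      - SsU * SUU⁻¹ * (SUD k * (L k)⁻¹ * SDs' k)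
      + SsD k * (L k)⁻¹ * SDs' k := by
  have hdet : IsUnit SUU.det := isUnit_iff_ne_zero.2 hUU.det_pos.ne'
  have hBD : (Matrix.blockDiagonal' L)⁻¹ = Matrix.blockDiagonal' fun i => (L i)⁻¹ := by
    apply inv_eq_right_inv
    rw [← Matrix.blockDiagonal'_mul L fun i => (L i)⁻¹]
    have : (fun i => L i * (L i)⁻¹) = fun i => (1 : Matrix (δ i) (δ i) ℝ) := by
      funext i
      exact Matrix.mul_nonsing_inv _ (isUnit_iff_ne_zero.2 (hL i).det_pos.ne')
    rw [this]; exact Matrix.blockDiagonal'_one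
  have hrow : (Matrix.of fun (_ : Unit) (d : Sigma δ) =>
        if d.1 = k then SsD d.1 () d.2 else (SsU * SUU⁻¹ * SUD d.1) () d.2)
      = Matrix.of fun (_ : Unit) (d : Sigma δ) =>
        (if d.1 = k then SsD d.1 else SsU * SUU⁻¹ * SUD d.1) () d.2 := by
    ext u d; simp only [Matrix.of_apply]; split_ifs <;> rfl
  have hcol : (Matrix.of fun (d : Sigma δ) (_ : Unit) =>
        if d.1 = k then SDs' d.1 d.2 () else ((SUD d.1)ᵀ * SUU⁻¹ * SUs') d.2 ())
      = Matrix.of fun (d : Sigma δ) (_ : Unit) =>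
        (if d.1 = k then SDs' d.1 else (SUD d.1)ᵀ * SUU⁻¹ * SUs') d.2 () := by
    ext d u; simp only [Matrix.of_apply]; split_ifs <;> rfl
  rw [hrow, hcol, hBD,
    key_rbc (fun i => if i = k then SsD i else SsU * SUU⁻¹ * SUD i)
      (fun i => if i = k then SDs' i else (SUD i)ᵀ * SUU⁻¹ * SUs') (fun i => (L i)⁻¹)]
  rw [← Finset.add_sum_erase _ _ (Finset.mem_univ k)]
  rw [Finset.sum_congr rfl (fun i hi => by
    rw [if_neg (Finset.ne_of_mem_erase hi), if_neg (Finset.ne_of_mem_erase hi)])]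
  rw [if_pos rfl, if_pos rfl]
  -- expand RHS
  have hsum : (∑ i, SUD i * (L i)⁻¹ * (SUD i)ᵀ)
      = SUD k * (L k)⁻¹ * (SUD k)ᵀ
        + ∑ i ∈ Finset.univ.erase k, SUD i * (L i)⁻¹ * (SUD i)ᵀ :=
    (Finset.add_sum_erase _ _ (Finset.mem_univ k)).symm
  have h0 : SUU * (SUU⁻¹ * SUs') = SUs' := by
    rw [← Matrix.mul_assoc, Matrix.mul_nonsing_inv _ hdet, Matrix.one_mul]
  rw [hsum]
  simp only [Matrix.mul_add, Matrix.add_mul, Matrix.mul_sub, Matrix.sub_mul,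
    Matrix.mul_sum, Matrix.sum_mul, Matrix.mul_assoc, h0]
  abel
end

section
/- If τ_s = i ≠ j = τ_{s'}, then Γ̃_{sD} Λ⁻¹ Γ̃_{Ds'} = α_{sU} Σ̈_UU α_{Us'} + Σ_{sU} Σ_UU⁻¹ Σ_{Us'} − γ_{sU}^i α_{Us'} − α_{sU} γ_{Us'}^j, with α_{sU} ≜ Σ_{sU} Σ_UU⁻¹. -/
open Matrix

lemma helper_row_bd_col {K : Type*} [Fintype K] [DecidableEq K]
    {δ : K → Type*} [∀ k, Fintype (δ k)]
    (a : ∀ k, Matrix Unit (δ k) ℝ) (M : ∀ k, Matrix (δ k) (δ k) ℝ)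
    (b : ∀ k, Matrix (δ k) Unit ℝ) :
    (Matrix.of fun (_ : Unit) (d : Sigma δ) => a d.1 () d.2)
      * Matrix.blockDiagonal' M
      * (Matrix.of fun (d : Sigma δ) (_ : Unit) => b d.1 d.2 ())
    = ∑ k, a k * M k * b k := by
  apply Matrix.ext
  intro x y
  obtain ⟨⟩ := x
  obtain ⟨⟩ := y
  rw [mul_apply, ← Finset.univ_sigma_univ, Finset.sum_sigma, Matrix.sum_apply]
  refine Finset.sum_congr rfl fun k _ => ?_
  rw [mul_apply]
  refine Finset.sum_congr rfl fun x2 _ => ?_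
  congr 1
  rw [mul_apply, mul_apply, ← Finset.univ_sigma_univ, Finset.sum_sigma]
  rw [Finset.sum_eq_single_of_mem k (Finset.mem_univ k)]
  · exact Finset.sum_congr rfl fun x1 _ => by simp [blockDiagonal'_apply]
  · intro k1 _ hk1
    exact Finset.sum_eq_zero fun x1 _ => by simp [blockDiagonal'_apply, hk1]

/-- Equation (16) of the appendix (different-vehicle case `τ_s = i ≠ j = τ_{s'}`):
`Γ̃_{sD} Λ⁻¹ Γ̃_{Ds'} = α_{sU} Σ̈_UU α_{Us'} + Σ_{sU} Σ_UU⁻¹ Σ_{Us'} − γ_{sU}^i α_{Us'} − α_{sU} γ_{Us'}^j`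
with `α_{sU} = Σ_{sU} Σ_UU⁻¹`, `α_{Us'} = Σ_UU⁻¹ Σ_{Us'}`, and local/global summary
terms `Σ̇`, `Σ̈`, `γ` as in Theorem 1B. -/
theorem stmt5 {K U : Type*} [Fintype K] [DecidableEq K] [Fintype U] [DecidableEq U]
    {δ : K → Type*} [∀ k, Fintype (δ k)] [∀ k, DecidableEq (δ k)]
    (i j : K) (hij : i ≠ j)
    (SsU : Matrix Unit U ℝ) (SUs' : Matrix U Unit ℝ) (SUU : Matrix U U ℝ)
    (hUU : SUU.PosDef)
    (SsD : ∀ k, Matrix Unit (δ k) ℝ) (SDs' : ∀ k, Matrix (δ k) Unit ℝ)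
    (SUD : ∀ k, Matrix U (δ k) ℝ)
    (L : ∀ k, Matrix (δ k) (δ k) ℝ) (hL : ∀ k, (L k).PosDef) :
    (Matrix.of fun (_ : Unit) (d : Sigma δ) =>
        if d.1 = i then SsD d.1 () d.2 else (SsU * SUU⁻¹ * SUD d.1) () d.2)
      * (Matrix.blockDiagonal' L)⁻¹
      * (Matrix.of fun (d : Sigma δ) (_ : Unit) =>
          if d.1 = j then SDs' d.1 d.2 () else ((SUD d.1)ᵀ * SUU⁻¹ * SUs') d.2 ())
    = SsU * SUU⁻¹ * (SUU + ∑ k, SUD k * (L k)⁻¹ * (SUD k)ᵀ) * (SUU⁻¹ * SUs')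
      + SsU * SUU⁻¹ * SUs'
      - (SsU + SsU * SUU⁻¹ * (SUD i * (L i)⁻¹ * (SUD i)ᵀ)
          - SsD i * (L i)⁻¹ * (SUD i)ᵀ) * (SUU⁻¹ * SUs')
      - SsU * SUU⁻¹
          * (SUs' + SUD j * (L j)⁻¹ * (SUD j)ᵀ * SUU⁻¹ * SUs'
              - SUD j * (L j)⁻¹ * SDs' j) := by
  have hLinv : (Matrix.blockDiagonal' L)⁻¹ = Matrix.blockDiagonal' (fun k => (L k)⁻¹) := by
    apply Matrix.inv_eq_right_inv
    rw [← Matrix.blockDiagonal'_mul]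
    have : (fun k => L k * (L k)⁻¹) = (1 : ∀ k, Matrix (δ k) (δ k) ℝ) := by
      funext k
      exact Matrix.mul_nonsing_inv _ (isUnit_iff_ne_zero.2 (hL k).det_pos.ne')
    rw [this, Matrix.blockDiagonal'_one]
  set a : ∀ k, Matrix Unit (δ k) ℝ :=
    fun k => if k = i then SsD k else SsU * SUU⁻¹ * SUD k with ha
  set b : ∀ k, Matrix (δ k) Unit ℝ :=
    fun k => if k = j then SDs' k else (SUD k)ᵀ * SUU⁻¹ * SUs' with hb
  have hA : (Matrix.of fun (_ : Unit) (d : Sigma δ) =>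
      if d.1 = i then SsD d.1 () d.2 else (SsU * SUU⁻¹ * SUD d.1) () d.2)
      = Matrix.of fun (_ : Unit) (d : Sigma δ) => a d.1 () d.2 := by
    ext x d
    simp only [ha, of_apply]
    split_ifs <;> rfl
  have hB : (Matrix.of fun (d : Sigma δ) (_ : Unit) =>
      if d.1 = j then SDs' d.1 d.2 () else ((SUD d.1)ᵀ * SUU⁻¹ * SUs') d.2 ())
      = Matrix.of fun (d : Sigma δ) (_ : Unit) => b d.1 d.2 () := by
    ext d x
    simp only [hb, of_apply]
    split_ifs <;> rfl
  rw [hLinv, hA, hB, helper_row_bd_col]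
  set D : K → Matrix Unit Unit ℝ :=
    fun k => SsU * SUU⁻¹ * SUD k * (L k)⁻¹ * ((SUD k)ᵀ * SUU⁻¹ * SUs') with hD
  have hsum : ∀ k ∈ Finset.univ, a k * (L k)⁻¹ * b k
      = D k + (if k = i then (a i * (L i)⁻¹ * b i - D i) else 0)
            + (if k = j then (a j * (L j)⁻¹ * b j - D j) else 0) := by
    intro k _
    by_cases hki : k = i
    · subst hki
      rw [if_pos rfl, if_neg hij]
      abel
    · by_cases hkj : k = j
      · subst hkj
        rw [if_neg hki, if_pos rfl]
        abel
      · rw [if_neg hki, if_neg hkj, ha, hb]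
        simp only [if_neg hki, if_neg hkj, hD]
        abel
  rw [Finset.sum_congr rfl hsum, Finset.sum_add_distrib, Finset.sum_add_distrib]
  simp only [Finset.sum_ite_eq', Finset.mem_univ, if_true]
  have h1 : SsU * SUU⁻¹ * SUU = SsU := by
    rw [Matrix.mul_assoc, Matrix.nonsing_inv_mul _ (isUnit_iff_ne_zero.2 hUU.det_pos.ne'),
      Matrix.mul_one]
  have hai : a i = SsD i := by simp [ha]
  have haj : a j = SsU * SUU⁻¹ * SUD j := by simp [ha, hij.symm]
  have hbi : b i = (SUD i)ᵀ * SUU⁻¹ * SUs' := by simp [hb, hij]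
  have hbj : b j = SDs' j := by simp [hb]
  rw [hai, haj, hbi, hbj, hD]
  simp only [Matrix.mul_add, Matrix.add_mul, Matrix.mul_sub, Matrix.sub_mul,
    Matrix.mul_sum, Finset.sum_mul, Matrix.mul_assoc]
  rw [show SsU * (SUU⁻¹ * (SUU * (SUU⁻¹ * SUs'))) = SsU * (SUU⁻¹ * SUs') by
    rw [← Matrix.mul_assoc SUU, Matrix.mul_nonsing_inv _ (isUnit_iff_ne_zero.2 hUU.det_pos.ne'),
      Matrix.one_mul]]
  rw [Matrix.sum_mul]
  simp only [Matrix.mul_assoc]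
  abel
end

section
/- The GP-DDF⁺ predictive mean equals the PIC predictive mean: μ_s + Γ̃_{sD}(Γ_DD + Λ)⁻¹(z_D − μ_D) = μ_s + (γ_{sU}^k Σ̈_UU⁻¹ z̈_U − Σ_{sU} Σ_UU⁻¹ ż_U^k) + ż_s^k, where k = τ_s, Γ_DD ≜ Σ_DU Σ_UU⁻¹ Σ_UD, z̈_U ≜ Σ_k ż_U^k. -/
/-!
Split `Γ̃_{sD} = Σ_{sU} Σ_UU⁻¹ Σ_UD + E` with `E` supported on the block `D_{τ_s}`. The Woodbury
identity `(Σ_DU Σ_UU⁻¹ Σ_UD + Λ)⁻¹ = Λ⁻¹ - Λ⁻¹ Σ_DU Σ̈_UU⁻¹ Σ_UD Λ⁻¹` turns the left side into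
products `Σ_UD Λ⁻¹ (·)`, which by block-diagonality of `Λ` are sums of local summaries, and
`E Λ⁻¹ (·)`, which only see block `τ_s`. What remains collapses by
`Σ_UU⁻¹ (Σ̈_UU - Σ_UU) Σ̈_UU⁻¹ = Σ_UU⁻¹ - Σ̈_UU⁻¹`.
-/

open Matrix

namespace Matrix

section SigmaBlocks

variable {ι R : Type*} {δ ε : ι → Type*} {l m n : Type*}

def sigmaRow (B : ∀ k, Matrix m (δ k) R) : Matrix m (Σ k, δ k) R :=
  of fun i d => B d.1 i d.2

def sigmaCol (C : ∀ k, Matrix (δ k) n R) : Matrix (Σ k, δ k) n R :=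
  of fun d j => C d.1 d.2 j

lemma sigmaRow_add [Add R] (B B' : ∀ k, Matrix m (δ k) R) :
    sigmaRow (B + B') = sigmaRow B + sigmaRow B' := rfl

lemma mul_sigmaRow [Fintype m] [NonUnitalNonAssocSemiring R] (X : Matrix l m R)
    (B : ∀ k, Matrix m (δ k) R) : X * sigmaRow B = sigmaRow fun k => X * B k := rfl

lemma sigmaRow_mul_sigmaCol [Fintype ι] [∀ k, Fintype (δ k)] [NonUnitalNonAssocSemiring R]
    (B : ∀ k, Matrix m (δ k) R) (C : ∀ k, Matrix (δ k) n R) :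
    sigmaRow B * sigmaCol C = ∑ k, B k * C k := by
  ext i j
  simp only [mul_apply, sum_apply, sigmaRow, sigmaCol, of_apply, ← Finset.univ_sigma_univ,
    Finset.sum_sigma]

lemma blockDiagonal'_mul_sigmaCol [Fintype ι] [DecidableEq ι] [∀ k, Fintype (δ k)]
    [NonUnitalNonAssocSemiring R] (M : ∀ k, Matrix (ε k) (δ k) R) (C : ∀ k, Matrix (δ k) n R) :
    blockDiagonal' M * sigmaCol C = sigmaCol fun k => M k * C k := by
  ext ⟨k, x⟩ j
  simp only [mul_apply, sigmaCol, of_apply, ← Finset.univ_sigma_univ, Finset.sum_sigma]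
  rw [Finset.sum_eq_single k]
  · simp [blockDiagonal'_apply_eq]
  · intro k' _ hk'
    simp [blockDiagonal'_apply_ne M _ _ (Ne.symm hk')]
  · simp

lemma sigmaRow_mul_blockDiagonal'_mul_sigmaCol [Fintype ι] [DecidableEq ι]
    [∀ k, Fintype (δ k)] [∀ k, Fintype (ε k)] [NonUnitalSemiring R]
    (B : ∀ k, Matrix m (ε k) R) (M : ∀ k, Matrix (ε k) (δ k) R) (C : ∀ k, Matrix (δ k) n R) :
    sigmaRow B * blockDiagonal' M * sigmaCol C = ∑ k, B k * M k * C k := by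
  simp only [Matrix.mul_assoc, blockDiagonal'_mul_sigmaCol, sigmaRow_mul_sigmaCol]

lemma sigmaRow_single_mul_blockDiagonal'_mul_sigmaCol [Fintype ι] [DecidableEq ι]
    [∀ k, Fintype (δ k)] [∀ k, Fintype (ε k)] [NonUnitalSemiring R] (τ : ι)
    (F : Matrix m (ε τ) R) (M : ∀ k, Matrix (ε k) (δ k) R) (C : ∀ k, Matrix (δ k) n R) :
    sigmaRow (Pi.single τ F) * blockDiagonal' M * sigmaCol C = F * M τ * C τ := by
  rw [sigmaRow_mul_blockDiagonal'_mul_sigmaCol, Finset.sum_eq_single τ]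
  · rw [Pi.single_eq_same]
  · intro k _ hk
    rw [Pi.single_eq_of_ne hk, Matrix.zero_mul, Matrix.zero_mul]
  · simp

lemma sigmaRow_ite_eq_add_single [DecidableEq ι] [AddCommGroup R] (τ : ι)
    (F G : ∀ k, Matrix m (δ k) R) :
    sigmaRow (fun k => if k = τ then F k else G k)
      = sigmaRow G + sigmaRow (Pi.single τ (F τ - G τ)) := by
  rw [← sigmaRow_add]
  congr 1
  funext k
  by_cases hk : k = τ
  · subst hk
    simp
  · simp [hk]

variable [Fintype ι] [DecidableEq ι] [∀ k, Fintype (δ k)] [∀ k, DecidableEq (δ k)] [CommRing R]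

lemma isUnit_blockDiagonal' {L : ∀ k, Matrix (δ k) (δ k) R} (hL : ∀ k, IsUnit (L k)) :
    IsUnit (blockDiagonal' L) :=
  (Pi.isUnit_iff.mpr hL).map (blockDiagonal'RingHom δ R)

lemma inv_blockDiagonal' {L : ∀ k, Matrix (δ k) (δ k) R} (hL : ∀ k, IsUnit (L k)) :
    (blockDiagonal' L)⁻¹ = blockDiagonal' fun k => (L k)⁻¹ := by
  refine inv_eq_right_inv ?_
  rw [← blockDiagonal'_mul, ← blockDiagonal'_one]
  congr 1
  funext k
  exact mul_nonsing_inv _ ((isUnit_iff_isUnit_det _).mp (hL k))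

end SigmaBlocks

section LowRankUpdate

variable {R D U s t : Type*} [CommRing R] [Fintype D] [DecidableEq D] [Fintype U] [DecidableEq U]

/-- With `Λ` block diagonal, `Q Λ⁻¹ r` and `Q Λ⁻¹ P` become the global summaries and
`E Λ⁻¹ (·)` the local summaries of the assigned block. -/
theorem mul_inv_add_mul_inv_mul_mul_eq {C : Matrix U U R} {Λ : Matrix D D R}
    (P : Matrix D U R) (Q : Matrix U D R) (Y : Matrix s U R) (E : Matrix s D R)
    (r : Matrix D t R) (hC : IsUnit C) (hΛ : IsUnit Λ) (hS : IsUnit (C + Q * Λ⁻¹ * P)) :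
    (Y * C⁻¹ * Q + E) * (P * C⁻¹ * Q + Λ)⁻¹ * r
      = (Y - E * Λ⁻¹ * P) * (C + Q * Λ⁻¹ * P)⁻¹ * (Q * Λ⁻¹ * r) + E * Λ⁻¹ * r := by
  set S := C + Q * Λ⁻¹ * P with hS_def
  have hdC : IsUnit C.det := (isUnit_iff_isUnit_det C).mp hC
  have hdS : IsUnit S.det := (isUnit_iff_isUnit_det S).mp hS
  have hWoodbury : (P * C⁻¹ * Q + Λ)⁻¹ = Λ⁻¹ - Λ⁻¹ * P * S⁻¹ * Q * Λ⁻¹ := by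
    rw [add_comm, add_mul_mul_inv_eq_sub _ _ _ _ hΛ (isUnit_nonsing_inv_iff.mpr hC)
      (by rwa [nonsing_inv_nonsing_inv _ hdC]), nonsing_inv_nonsing_inv _ hdC]
  have hinv_sub : C⁻¹ * (Q * Λ⁻¹ * P) * S⁻¹ = C⁻¹ - S⁻¹ := by
    rw [show Q * Λ⁻¹ * P = S - C by rw [hS_def]; abel, Matrix.mul_sub, Matrix.sub_mul,
      nonsing_inv_mul _ hdC, Matrix.one_mul, Matrix.mul_assoc, mul_nonsing_inv _ hdS,
      Matrix.mul_one]
  have hcollapse : Y * (C⁻¹ * (Q * (Λ⁻¹ * (P * (S⁻¹ * (Q * (Λ⁻¹ * r)))))))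
      = Y * (C⁻¹ * (Q * (Λ⁻¹ * r))) - Y * (S⁻¹ * (Q * (Λ⁻¹ * r))) := by
    rw [← Matrix.mul_sub, ← Matrix.sub_mul, ← hinv_sub]
    simp only [Matrix.mul_assoc]
  rw [hWoodbury]
  simp only [Matrix.add_mul, Matrix.mul_sub, Matrix.sub_mul, Matrix.mul_assoc] at hcollapse ⊢
  rw [hcollapse]
  abel

end LowRankUpdate

lemma posDef_add_sum_mul_inv_mul_transpose {K U : Type*} [Fintype K] [Fintype U] [DecidableEq U]
    {δ : K → Type*} [∀ k, Fintype (δ k)] [∀ k, DecidableEq (δ k)] {C : Matrix U U ℝ}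
    (hC : C.PosDef) (B : ∀ k, Matrix U (δ k) ℝ) {L : ∀ k, Matrix (δ k) (δ k) ℝ}
    (hL : ∀ k, (L k).PosDef) : (C + ∑ k, B k * (L k)⁻¹ * (B k)ᵀ).PosDef :=
  hC.add_posSemidef <| posSemidef_sum _ fun k _ => by
    simpa only [conjTranspose_eq_transpose_of_trivial] using
      (hL k).inv.posSemidef.mul_mul_conjTranspose_same (B k)

end Matrix

/-- Theorem 1B (mean part): the GP-DDF⁺ predictive mean equals the PIC predictive mean,
`μ_s + Γ̃_{sD}(Γ_DD + Λ)⁻¹(z_D − μ_D)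
   = μ_s + (γ_{sU}^k Σ̈_UU⁻¹ z̈_U − Σ_{sU} Σ_UU⁻¹ ż_U^k) + ż_s^k`,
where `k = τ_s`, `Γ_DD = Σ_DU Σ_UU⁻¹ Σ_UD`, `Λ` is block-diagonal with positive definite
blocks `L k = Σ_{D_k D_k|U}`, and the local and global summaries are as in the paper. -/
theorem stmt6 {K U : Type*} [Fintype K] [DecidableEq K] [Fintype U] [DecidableEq U]
    {δ : K → Type*} [∀ k, Fintype (δ k)] [∀ k, DecidableEq (δ k)]
    (τs : K) (mus : Matrix Unit Unit ℝ)
    (SsU : Matrix Unit U ℝ) (SUU : Matrix U U ℝ) (hUU : SUU.PosDef)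
    (SsD : ∀ k, Matrix Unit (δ k) ℝ) (SUD : ∀ k, Matrix U (δ k) ℝ)
    (L : ∀ k, Matrix (δ k) (δ k) ℝ) (hL : ∀ k, (L k).PosDef)
    (z μ : ∀ k, Matrix (δ k) Unit ℝ) :
    mus
      + (Matrix.of fun (_ : Unit) (d : Sigma δ) =>
            if d.1 = τs then SsD d.1 () d.2 else (SsU * SUU⁻¹ * SUD d.1) () d.2)
        * ((Matrix.of fun (d : Sigma δ) (u : U) => SUD d.1 u d.2)
             * SUU⁻¹ * (Matrix.of fun (u : U) (d : Sigma δ) => SUD d.1 u d.2)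
           + Matrix.blockDiagonal' L)⁻¹
        * (Matrix.of fun (d : Sigma δ) (_ : Unit) => (z d.1 - μ d.1) d.2 ())
    = mus
      + ((SsU + SsU * SUU⁻¹ * (SUD τs * (L τs)⁻¹ * (SUD τs)ᵀ)
            - SsD τs * (L τs)⁻¹ * (SUD τs)ᵀ)
          * (SUU + ∑ k, SUD k * (L k)⁻¹ * (SUD k)ᵀ)⁻¹
          * (∑ k, SUD k * (L k)⁻¹ * (z k - μ k))
        - SsU * SUU⁻¹ * (SUD τs * (L τs)⁻¹ * (z τs - μ τs)))
      + SsD τs * (L τs)⁻¹ * (z τs - μ τs) := by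
  have hΓ : (Matrix.of fun (_ : Unit) (d : Sigma δ) =>
        if d.1 = τs then SsD d.1 () d.2 else (SsU * SUU⁻¹ * SUD d.1) () d.2)
      = SsU * SUU⁻¹ * sigmaRow SUD
        + sigmaRow (Pi.single τs (SsD τs - SsU * SUU⁻¹ * SUD τs)) := by
    rw [mul_sigmaRow, ← sigmaRow_ite_eq_add_single]
    ext ⟨⟩ d
    exact (apply_ite (fun M : Matrix Unit (δ d.1) ℝ => M () d.2) _ _ _).symm
  have hr : (Matrix.of fun (d : Sigma δ) (_ : Unit) => (z d.1 - μ d.1) d.2 ())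
      = sigmaCol fun k => z k - μ k := by
    ext d ⟨⟩
    rfl
  have hΛ : ∀ k, IsUnit (L k) := fun k => (hL k).isUnit
  have hS := posDef_add_sum_mul_inv_mul_transpose hUU SUD hL
  rw [hΓ, hr, show (Matrix.of fun (d : Sigma δ) (u : U) => SUD d.1 u d.2)
      = sigmaCol fun k => (SUD k)ᵀ from rfl,
    show (Matrix.of fun (u : U) (d : Sigma δ) => SUD d.1 u d.2) = sigmaRow SUD from rfl,
    mul_inv_add_mul_inv_mul_mul_eq _ _ _ _ _ hUU.isUnit (isUnit_blockDiagonal' hΛ)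
      (by rw [inv_blockDiagonal' hΛ, sigmaRow_mul_blockDiagonal'_mul_sigmaCol]; exact hS.isUnit)]
  simp only [inv_blockDiagonal' hΛ, sigmaRow_single_mul_blockDiagonal'_mul_sigmaCol]
  simp only [sigmaRow_mul_blockDiagonal'_mul_sigmaCol]
  simp only [Matrix.sub_mul, Matrix.mul_sub, Matrix.add_mul, Matrix.mul_assoc]
  abel
end

section
/- The GP-DDF⁺ predictive covariance equals the PIC predictive covariance in the same-vehicle case: if τ_s = τ_{s'} = k, then σ_{ss'} − Γ̃_{sD}(Γ_DD + Λ)⁻¹ Γ̃_{Ds'} = σ_{ss'} − (γ_{sU}^k Σ_UU⁻¹ Σ_{Us'} − Σ_{sU} Σ_UU⁻¹ Σ̇_{Us'}^k − γ_{sU}^k Σ̈_UU⁻¹ γ_{Us'}^k) − Σ̇_{ss'}^k. -/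
open Matrix

section helpers
set_option linter.unusedSectionVars false
variable {K : Type*} [Fintype K] [DecidableEq K] {δ : K → Type*} [∀ k, Fintype (δ k)]
  [∀ k, DecidableEq (δ k)]

lemma keyA' {m : Type*} [Fintype m]
    (x : ∀ i, Matrix m (δ i) ℝ) (N : ∀ i, Matrix (δ i) (δ i) ℝ) :
    (Matrix.of fun (r : m) (d : Sigma δ) => x d.1 r d.2) * blockDiagonal' N
      = Matrix.of fun (r : m) (d : Sigma δ) => (x d.1 * N d.1) r d.2 := by
  ext r ⟨j, b⟩
  simp only [Matrix.mul_apply, Matrix.of_apply, blockDiagonal'_apply]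
  rw [← Finset.univ_sigma_univ, Finset.sum_sigma]
  rw [Finset.sum_eq_single j]
  · simp [Matrix.mul_apply]
  · intro i _ hij
    simp [hij]
  · simp

lemma keyB' {m n : Type*} [Fintype m] [Fintype n]
    (z : ∀ i, Matrix m (δ i) ℝ) (y : ∀ i, Matrix (δ i) n ℝ) :
    (Matrix.of fun (r : m) (d : Sigma δ) => z d.1 r d.2)
      * (Matrix.of fun (d : Sigma δ) (c : n) => y d.1 d.2 c)
    = ∑ i, z i * y i := by
  ext r c
  simp only [Matrix.mul_apply, Matrix.of_apply, Matrix.sum_apply]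
  rw [← Finset.univ_sigma_univ, Finset.sum_sigma]

lemma key' {m n : Type*} [Fintype m] [Fintype n]
    (x : ∀ i, Matrix m (δ i) ℝ) (N : ∀ i, Matrix (δ i) (δ i) ℝ) (y : ∀ i, Matrix (δ i) n ℝ) :
    (Matrix.of fun (r : m) (d : Sigma δ) => x d.1 r d.2) * blockDiagonal' N
      * (Matrix.of fun (d : Sigma δ) (c : n) => y d.1 d.2 c)
    = ∑ i, x i * N i * y i := by
  rw [keyA']; exact keyB' (fun i => x i * N i) y

end helpers

lemma aux_inv' {p q : Type*} [Fintype p] [DecidableEq p] [Fintype q] [DecidableEq q]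
    (Pm S : Matrix p p ℝ) (Bl : Matrix q p ℝ) (Br : Matrix p q ℝ) (Λ Λi : Matrix q q ℝ)
    (hΛ : Λ * Λi = 1) (hP : Pm⁻¹ * Pm = 1) (hM : (Pm + S) * (Pm + S)⁻¹ = 1)
    (hS : Br * Λi * Bl = S) :
    (Bl * Pm⁻¹ * Br + Λ)⁻¹ = Λi - Λi * Bl * (Pm + S)⁻¹ * (Br * Λi) := by
  apply Matrix.inv_eq_right_inv
  have c1 : ∀ (Y : Matrix q q ℝ), Λ * (Λi * Y) = Y := fun Y => by
    rw [← Matrix.mul_assoc, hΛ, Matrix.one_mul]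
  have cS : ∀ (Y : Matrix p q ℝ), Br * (Λi * (Bl * Y)) = S * Y := fun Y => by
    rw [← Matrix.mul_assoc, ← Matrix.mul_assoc, hS]
  have key2 : Bl * (Pm⁻¹ * (S * ((Pm + S)⁻¹ * (Br * Λi)))) + Bl * ((Pm + S)⁻¹ * (Br * Λi))
      = Bl * (Pm⁻¹ * (Br * Λi)) := by
    calc Bl * (Pm⁻¹ * (S * ((Pm + S)⁻¹ * (Br * Λi)))) + Bl * ((Pm + S)⁻¹ * (Br * Λi))
        = Bl * (Pm⁻¹ * (S * ((Pm + S)⁻¹ * (Br * Λi))))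
            + Bl * (Pm⁻¹ * (Pm * ((Pm + S)⁻¹ * (Br * Λi)))) := by
          rw [← Matrix.mul_assoc Pm⁻¹ Pm, hP, Matrix.one_mul]
      _ = Bl * (Pm⁻¹ * (S * ((Pm + S)⁻¹ * (Br * Λi)) + Pm * ((Pm + S)⁻¹ * (Br * Λi)))) := by
          rw [Matrix.mul_add, Matrix.mul_add]
      _ = Bl * (Pm⁻¹ * ((S + Pm) * ((Pm + S)⁻¹ * (Br * Λi)))) := by rw [Matrix.add_mul]
      _ = Bl * (Pm⁻¹ * (Br * Λi)) := by
          rw [add_comm S Pm, ← Matrix.mul_assoc (Pm + S), hM, Matrix.one_mul]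
  simp only [Matrix.add_mul, Matrix.mul_sub, Matrix.mul_assoc]
  rw [hΛ, c1, cS, ← key2]
  abel

/-- Theorem 1B (covariance part, same-vehicle case `τ_s = τ_{s'} = k`):
`σ_{ss'} − Γ̃_{sD}(Γ_DD + Λ)⁻¹ Γ̃_{Ds'}
   = σ_{ss'} − (γ_{sU}^k Σ_UU⁻¹ Σ_{Us'} − Σ_{sU} Σ_UU⁻¹ Σ̇_{Us'}^k − γ_{sU}^k Σ̈_UU⁻¹ γ_{Us'}^k)
       − Σ̇_{ss'}^k`. -/
theorem stmt7 {K U : Type*} [Fintype K] [DecidableEq K] [Fintype U] [DecidableEq U]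
    {δ : K → Type*} [∀ k, Fintype (δ k)] [∀ k, DecidableEq (δ k)]
    (k : K) (σss' : Matrix Unit Unit ℝ)
    (SsU : Matrix Unit U ℝ) (SUs' : Matrix U Unit ℝ) (SUU : Matrix U U ℝ)
    (hUU : SUU.PosDef)
    (SsD : ∀ i, Matrix Unit (δ i) ℝ) (SDs' : ∀ i, Matrix (δ i) Unit ℝ)
    (SUD : ∀ i, Matrix U (δ i) ℝ)
    (L : ∀ i, Matrix (δ i) (δ i) ℝ) (hL : ∀ i, (L i).PosDef) :
    σss'
      - (Matrix.of fun (_ : Unit) (d : Sigma δ) =>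
            if d.1 = k then SsD d.1 () d.2 else (SsU * SUU⁻¹ * SUD d.1) () d.2)
        * ((Matrix.of fun (d : Sigma δ) (u : U) => SUD d.1 u d.2)
             * SUU⁻¹ * (Matrix.of fun (u : U) (d : Sigma δ) => SUD d.1 u d.2)
           + Matrix.blockDiagonal' L)⁻¹
        * (Matrix.of fun (d : Sigma δ) (_ : Unit) =>
            if d.1 = k then SDs' d.1 d.2 () else ((SUD d.1)ᵀ * SUU⁻¹ * SUs') d.2 ())
    = σss'
      - ((SsU + SsU * SUU⁻¹ * (SUD k * (L k)⁻¹ * (SUD k)ᵀ)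
            - SsD k * (L k)⁻¹ * (SUD k)ᵀ) * SUU⁻¹ * SUs'
          - SsU * SUU⁻¹ * (SUD k * (L k)⁻¹ * SDs' k)
          - (SsU + SsU * SUU⁻¹ * (SUD k * (L k)⁻¹ * (SUD k)ᵀ)
              - SsD k * (L k)⁻¹ * (SUD k)ᵀ)
            * (SUU + ∑ i, SUD i * (L i)⁻¹ * (SUD i)ᵀ)⁻¹
            * (SUs' + SUD k * (L k)⁻¹ * (SUD k)ᵀ * SUU⁻¹ * SUs'
                - SUD k * (L k)⁻¹ * SDs' k))
      - SsD k * (L k)⁻¹ * SDs' k := by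
  -- notation
  set S : Matrix U U ℝ := ∑ i, SUD i * (L i)⁻¹ * (SUD i)ᵀ with hSdef
  set Tk : Matrix U U ℝ := SUD k * (L k)⁻¹ * (SUD k)ᵀ with hTk
  -- invertibility facts
  have hLdet : ∀ i, IsUnit (L i).det := fun i => isUnit_iff_ne_zero.mpr (hL i).det_pos.ne'
  have hUUdet : IsUnit SUU.det := isUnit_iff_ne_zero.mpr hUU.det_pos.ne'
  have hSpsd : S.PosSemidef := by
    rw [hSdef]
    exact Finset.sum_induction _ _ (fun x y hx hy => hx.add hy) Matrix.PosSemidef.zero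
      (fun i _ => ((hL i).inv).posSemidef.mul_mul_conjTranspose_same (SUD i))
  have hMpd : (SUU + S).PosDef := hUU.add_posSemidef hSpsd
  have hMdet : IsUnit (SUU + S).det := isUnit_iff_ne_zero.mpr hMpd.det_pos.ne'
  have hMM : (SUU + S) * (SUU + S)⁻¹ = 1 := Matrix.mul_nonsing_inv _ hMdet
  have hMM' : (SUU + S)⁻¹ * (SUU + S) = 1 := Matrix.nonsing_inv_mul _ hMdet
  have hPP : SUU * SUU⁻¹ = 1 := Matrix.mul_nonsing_inv _ hUUdet
  have hPP' : SUU⁻¹ * SUU = 1 := Matrix.nonsing_inv_mul _ hUUdet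
  -- block pieces
  set vf : ∀ i, Matrix Unit (δ i) ℝ :=
    fun i => if i = k then SsD i else SsU * SUU⁻¹ * SUD i with hvf
  set wf : ∀ i, Matrix (δ i) Unit ℝ :=
    fun i => if i = k then SDs' i else (SUD i)ᵀ * SUU⁻¹ * SUs' with hwf
  have hv : (Matrix.of fun (_ : Unit) (d : Sigma δ) =>
        if d.1 = k then SsD d.1 () d.2 else (SsU * SUU⁻¹ * SUD d.1) () d.2)
      = Matrix.of fun (r : Unit) (d : Sigma δ) => vf d.1 r d.2 := by
    ext r ⟨i, ai⟩
    by_cases h : i = k <;> simp [hvf, h]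
  have hw : (Matrix.of fun (d : Sigma δ) (_ : Unit) =>
        if d.1 = k then SDs' d.1 d.2 () else ((SUD d.1)ᵀ * SUU⁻¹ * SUs') d.2 ())
      = Matrix.of fun (d : Sigma δ) (c : Unit) => wf d.1 d.2 c := by
    ext ⟨i, ai⟩ c
    by_cases h : i = k <;> simp [hwf, h]
  -- Λ * Λinv = 1
  have hΛ : Matrix.blockDiagonal' L * Matrix.blockDiagonal' (fun i => (L i)⁻¹) = 1 := by
    rw [← Matrix.blockDiagonal'_mul]
    have : (fun i => L i * (L i)⁻¹) = fun i : K => (1 : Matrix (δ i) (δ i) ℝ) := by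
      funext i; exact Matrix.mul_nonsing_inv _ (hLdet i)
    rw [this]
    exact Matrix.blockDiagonal'_one
  -- A Λinv Aᵀ = S
  have hS : (Matrix.of fun (u : U) (d : Sigma δ) => SUD d.1 u d.2)
        * Matrix.blockDiagonal' (fun i => (L i)⁻¹)
        * (Matrix.of fun (d : Sigma δ) (u : U) => SUD d.1 u d.2) = S := by
    rw [hSdef]
    exact key' SUD (fun i => (L i)⁻¹) (fun i => (SUD i)ᵀ)
  -- the inverse
  have hInv := aux_inv' SUU S
    (Matrix.of fun (d : Sigma δ) (u : U) => SUD d.1 u d.2)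
    (Matrix.of fun (u : U) (d : Sigma δ) => SUD d.1 u d.2)
    (Matrix.blockDiagonal' L) (Matrix.blockDiagonal' (fun i => (L i)⁻¹))
    hΛ hPP' hMM hS
  -- name the PIC vectors
  set a : Matrix Unit U ℝ := SsU + SsU * SUU⁻¹ * Tk - SsD k * (L k)⁻¹ * (SUD k)ᵀ with ha
  set b : Matrix U Unit ℝ := SUs' + Tk * SUU⁻¹ * SUs' - SUD k * (L k)⁻¹ * SDs' k with hb
  -- sum computations
  have hsum1 : ∑ i, vf i * (L i)⁻¹ * wf i
      = SsD k * (L k)⁻¹ * SDs' k + SsU * SUU⁻¹ * (S - Tk) * (SUU⁻¹ * SUs') := by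
    rw [← Finset.add_sum_erase _ _ (Finset.mem_univ k)]
    congr 1
    · simp [hvf, hwf]
    · have hterm : ∀ i ∈ Finset.univ.erase k, vf i * (L i)⁻¹ * wf i
          = SsU * SUU⁻¹ * (SUD i * (L i)⁻¹ * (SUD i)ᵀ) * (SUU⁻¹ * SUs') := fun i hi => by
        rw [Finset.mem_erase] at hi
        simp only [hvf, hwf, if_neg hi.1, Matrix.mul_assoc]
      rw [Finset.sum_congr rfl hterm, ← Matrix.sum_mul, ← Matrix.mul_sum,
        Finset.sum_erase_eq_sub (Finset.mem_univ k), ← hSdef, ← hTk]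
  have hsum2 : ∑ i, vf i * (L i)⁻¹ * (SUD i)ᵀ
      = SsD k * (L k)⁻¹ * (SUD k)ᵀ + SsU * SUU⁻¹ * (S - Tk) := by
    rw [← Finset.add_sum_erase _ _ (Finset.mem_univ k)]
    congr 1
    · simp [hvf]
    · have hterm : ∀ i ∈ Finset.univ.erase k, vf i * (L i)⁻¹ * (SUD i)ᵀ
          = SsU * SUU⁻¹ * (SUD i * (L i)⁻¹ * (SUD i)ᵀ) := fun i hi => by
        rw [Finset.mem_erase] at hi
        simp only [hvf, if_neg hi.1, Matrix.mul_assoc]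
      rw [Finset.sum_congr rfl hterm, ← Matrix.mul_sum,
        Finset.sum_erase_eq_sub (Finset.mem_univ k), ← hSdef, ← hTk]
  have hsum3 : ∑ i, SUD i * (L i)⁻¹ * wf i
      = SUD k * (L k)⁻¹ * SDs' k + (S - Tk) * (SUU⁻¹ * SUs') := by
    rw [← Finset.add_sum_erase _ _ (Finset.mem_univ k)]
    congr 1
    · simp [hwf]
    · have hterm : ∀ i ∈ Finset.univ.erase k, SUD i * (L i)⁻¹ * wf i
          = SUD i * (L i)⁻¹ * (SUD i)ᵀ * (SUU⁻¹ * SUs') := fun i hi => by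
        rw [Finset.mem_erase] at hi
        simp only [hwf, if_neg hi.1, Matrix.mul_assoc]
      rw [Finset.sum_congr rfl hterm, ← Matrix.sum_mul,
        Finset.sum_erase_eq_sub (Finset.mem_univ k), ← hSdef, ← hTk]
  -- the three block products
  have h1 : (Matrix.of fun (r : Unit) (d : Sigma δ) => vf d.1 r d.2)
        * Matrix.blockDiagonal' (fun i => (L i)⁻¹)
        * (Matrix.of fun (d : Sigma δ) (c : Unit) => wf d.1 d.2 c)
      = SsD k * (L k)⁻¹ * SDs' k + SsU * SUU⁻¹ * (S - Tk) * (SUU⁻¹ * SUs') :=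
    (key' vf (fun i => (L i)⁻¹) wf).trans hsum1
  have h2 : (Matrix.of fun (r : Unit) (d : Sigma δ) => vf d.1 r d.2)
        * Matrix.blockDiagonal' (fun i => (L i)⁻¹)
        * (Matrix.of fun (d : Sigma δ) (u : U) => SUD d.1 u d.2)
      = SsU * SUU⁻¹ * (SUU + S) - a := by
    have e : (Matrix.of fun (r : Unit) (d : Sigma δ) => vf d.1 r d.2)
        * Matrix.blockDiagonal' (fun i => (L i)⁻¹)
        * (Matrix.of fun (d : Sigma δ) (u : U) => SUD d.1 u d.2)
        = ∑ i, vf i * (L i)⁻¹ * (SUD i)ᵀ := key' vf (fun i => (L i)⁻¹) (fun i => (SUD i)ᵀ)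
    rw [e, hsum2, ha]
    have cPU : SsU * SUU⁻¹ * SUU = SsU := by rw [Matrix.mul_assoc, hPP', Matrix.mul_one]
    simp only [Matrix.mul_add, Matrix.mul_sub, cPU]
    abel
  have h3 : (Matrix.of fun (u : U) (d : Sigma δ) => SUD d.1 u d.2)
        * Matrix.blockDiagonal' (fun i => (L i)⁻¹)
        * (Matrix.of fun (d : Sigma δ) (c : Unit) => wf d.1 d.2 c)
      = (SUU + S) * (SUU⁻¹ * SUs') - b := by
    have e : (Matrix.of fun (u : U) (d : Sigma δ) => SUD d.1 u d.2)
        * Matrix.blockDiagonal' (fun i => (L i)⁻¹)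
        * (Matrix.of fun (d : Sigma δ) (c : Unit) => wf d.1 d.2 c)
        = ∑ i, SUD i * (L i)⁻¹ * wf i := key' SUD (fun i => (L i)⁻¹) wf
    rw [e, hsum3, hb]
    have cUP : SUU * (SUU⁻¹ * SUs') = SUs' := by rw [← Matrix.mul_assoc, hPP, Matrix.one_mul]
    simp only [Matrix.add_mul, Matrix.sub_mul, Matrix.mul_assoc, cUP]
    abel
  -- assemble
  rw [hv, hw, hInv]
  have expandEq :
      (Matrix.of fun (r : Unit) (d : Sigma δ) => vf d.1 r d.2)
        * (Matrix.blockDiagonal' (fun i => (L i)⁻¹)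
           - Matrix.blockDiagonal' (fun i => (L i)⁻¹)
               * (Matrix.of fun (d : Sigma δ) (u : U) => SUD d.1 u d.2)
               * (SUU + S)⁻¹
               * ((Matrix.of fun (u : U) (d : Sigma δ) => SUD d.1 u d.2)
                   * Matrix.blockDiagonal' (fun i => (L i)⁻¹)))
        * (Matrix.of fun (d : Sigma δ) (c : Unit) => wf d.1 d.2 c)
      = (Matrix.of fun (r : Unit) (d : Sigma δ) => vf d.1 r d.2)
          * Matrix.blockDiagonal' (fun i => (L i)⁻¹)
          * (Matrix.of fun (d : Sigma δ) (c : Unit) => wf d.1 d.2 c)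
        - ((Matrix.of fun (r : Unit) (d : Sigma δ) => vf d.1 r d.2)
            * Matrix.blockDiagonal' (fun i => (L i)⁻¹)
            * (Matrix.of fun (d : Sigma δ) (u : U) => SUD d.1 u d.2))
          * ((SUU + S)⁻¹
              * ((Matrix.of fun (u : U) (d : Sigma δ) => SUD d.1 u d.2)
                  * Matrix.blockDiagonal' (fun i => (L i)⁻¹)
                  * (Matrix.of fun (d : Sigma δ) (c : Unit) => wf d.1 d.2 c))) := by
    simp only [Matrix.mul_sub, Matrix.sub_mul, Matrix.mul_assoc]
  rw [expandEq, h1, h2, h3]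
  have cC : ∀ (Y : Matrix U Unit ℝ), (SUU + S) * ((SUU + S)⁻¹ * Y) = Y := fun Y => by
    rw [← Matrix.mul_assoc, hMM, Matrix.one_mul]
  have cD : ∀ (Y : Matrix U Unit ℝ), (SUU + S)⁻¹ * ((SUU + S) * Y) = Y := fun Y => by
    rw [← Matrix.mul_assoc, hMM', Matrix.one_mul]
  have step1 : (SsU * SUU⁻¹ * (SUU + S) - a)
        * ((SUU + S)⁻¹ * ((SUU + S) * (SUU⁻¹ * SUs') - b))
      = SsU * (SUU⁻¹ * ((SUU + S) * (SUU⁻¹ * SUs'))) - SsU * (SUU⁻¹ * b)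
        - a * (SUU⁻¹ * SUs') + a * ((SUU + S)⁻¹ * b) := by
    simp only [Matrix.mul_sub, Matrix.sub_mul, Matrix.mul_assoc, cC, cD]
    abel
  rw [step1]
  have cA : ∀ (Y : Matrix U Unit ℝ), SUU * (SUU⁻¹ * Y) = Y := fun Y => by
    rw [← Matrix.mul_assoc, hPP, Matrix.one_mul]
  simp only [hb, Matrix.mul_add, Matrix.add_mul, Matrix.mul_sub, Matrix.sub_mul,
    Matrix.mul_assoc, cA]
  abel
end

section
/- If K = 1 (a single vehicle holding all data D), the GP-DDF⁺ predictive mean reduces to the full GP posterior mean: μ_s + (γ_{sU}^1 Σ̈_UU⁻¹ z̈_U − Σ_{sU}Σ_UU⁻¹ ż_U^1) + ż_s^1 = μ_s + Σ_{sD} Σ_DD⁻¹ (z_D − μ_D). -/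
open Matrix

/-- Special case of Theorem 1B with a single vehicle (`K = 1`, `D_1 = D`):
the GP-DDF⁺ predictive mean reduces to the full GP posterior mean,
`μ_s + (γ_{sU}^1 Σ̈_UU⁻¹ z̈_U − Σ_{sU} Σ_UU⁻¹ ż_U^1) + ż_s^1
   = μ_s + Σ_{sD} Σ_DD⁻¹ (z_D − μ_D)`,
where `ż_B^1 = Σ_{BD} Σ_{DD|U}⁻¹ (z_D − μ_D)`, `Σ̇_{BB'}^1 = Σ_{BD} Σ_{DD|U}⁻¹ Σ_{DB'}`,
`z̈_U = ż_U^1`, `Σ̈_UU = Σ_UU + Σ̇_{UU}^1`, and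
`γ_{sU}^1 = Σ_{sU} + Σ_{sU} Σ_UU⁻¹ Σ̇_{UU}^1 − Σ̇_{sU}^1`. -/
theorem stmt9 {U D : Type*} [Fintype U] [DecidableEq U] [Fintype D] [DecidableEq D]
    (mus : Matrix Unit Unit ℝ)
    (SsU : Matrix Unit U ℝ) (SsD : Matrix Unit D ℝ)
    (SUU : Matrix U U ℝ) (SUD : Matrix U D ℝ) (SDD : Matrix D D ℝ)
    (hUU : SUU.PosDef) (hDD : SDD.PosDef)
    (hSchur : (SDD - SUDᵀ * SUU⁻¹ * SUD).PosDef)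
    (z muD : Matrix D Unit ℝ) :
    mus
      + ((SsU + SsU * SUU⁻¹ * (SUD * (SDD - SUDᵀ * SUU⁻¹ * SUD)⁻¹ * SUDᵀ)
            - SsD * (SDD - SUDᵀ * SUU⁻¹ * SUD)⁻¹ * SUDᵀ)
          * (SUU + SUD * (SDD - SUDᵀ * SUU⁻¹ * SUD)⁻¹ * SUDᵀ)⁻¹
          * (SUD * (SDD - SUDᵀ * SUU⁻¹ * SUD)⁻¹ * (z - muD))
        - SsU * SUU⁻¹ * (SUD * (SDD - SUDᵀ * SUU⁻¹ * SUD)⁻¹ * (z - muD)))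
      + SsD * (SDD - SUDᵀ * SUU⁻¹ * SUD)⁻¹ * (z - muD)
    = mus + SsD * SDD⁻¹ * (z - muD) := by
  set S := SDD - SUDᵀ * SUU⁻¹ * SUD with hSdef
  have hS : S.PosDef := hSchur
  set M := SUU + SUD * S⁻¹ * SUDᵀ with hMdef
  have hMpd : M.PosDef := by
    refine hUU.add_posSemidef ?_
    have h := hS.inv.posSemidef.mul_mul_conjTranspose_same SUD
    simpa [conjTranspose_eq_transpose_of_trivial] using h
  have hUd : IsUnit SUU.det := (Matrix.isUnit_iff_isUnit_det _).1 hUU.isUnit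
  have hSd : IsUnit S.det := (Matrix.isUnit_iff_isUnit_det _).1 hS.isUnit
  have hMd : IsUnit M.det := (Matrix.isUnit_iff_isUnit_det _).1 hMpd.isUnit
  -- Woodbury-type identity
  have hkey2 : M⁻¹ + SUU⁻¹ * (SUD * S⁻¹ * SUDᵀ) * M⁻¹ = SUU⁻¹ := by
    calc M⁻¹ + SUU⁻¹ * (SUD * S⁻¹ * SUDᵀ) * M⁻¹
        = (1 + SUU⁻¹ * (SUD * S⁻¹ * SUDᵀ)) * M⁻¹ := by
          rw [Matrix.add_mul, Matrix.one_mul]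
      _ = SUU⁻¹ * M * M⁻¹ := by
          rw [hMdef, Matrix.mul_add, Matrix.nonsing_inv_mul _ hUd]
      _ = SUU⁻¹ := by
          rw [Matrix.mul_assoc, Matrix.mul_nonsing_inv _ hMd, Matrix.mul_one]
  have h3 : SUU⁻¹ * (SUD * S⁻¹)
      = M⁻¹ * (SUD * S⁻¹)
        + SUU⁻¹ * (SUD * (S⁻¹ * (SUDᵀ * (M⁻¹ * (SUD * S⁻¹))))) := by
    conv_lhs => rw [← hkey2]
    simp only [Matrix.add_mul, Matrix.mul_assoc]
  have key : SDD⁻¹ = S⁻¹ - S⁻¹ * SUDᵀ * M⁻¹ * (SUD * S⁻¹) := by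
    refine Matrix.inv_eq_right_inv ?_
    have hDDeq : SDD = S + SUDᵀ * SUU⁻¹ * SUD := by rw [hSdef, sub_add_cancel]
    rw [hDDeq]
    simp only [Matrix.add_mul, Matrix.mul_sub, Matrix.mul_assoc]
    rw [Matrix.mul_nonsing_inv _ hSd, Matrix.mul_nonsing_inv_cancel_left _ _ hSd, h3]
    simp only [Matrix.mul_add]
    abel
  rw [key]
  have hγ1 : SsU + SsU * SUU⁻¹ * (SUD * S⁻¹ * SUDᵀ) = SsU * SUU⁻¹ * M := by
    rw [hMdef, Matrix.mul_add, Matrix.nonsing_inv_mul_cancel_right _ _ hUd]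
  have hγ : (SsU + SsU * SUU⁻¹ * (SUD * S⁻¹ * SUDᵀ) - SsD * S⁻¹ * SUDᵀ) * M⁻¹
      = SsU * SUU⁻¹ - SsD * S⁻¹ * SUDᵀ * M⁻¹ := by
    rw [Matrix.sub_mul, hγ1, Matrix.mul_nonsing_inv_cancel_right _ _ hMd]
  rw [hγ]
  simp only [Matrix.sub_mul, Matrix.mul_sub, Matrix.mul_assoc]
  abel
end
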